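/- arXiv:1601.02239 — 2 statements merged into one kernel-verified Lean document; each statement's English description precedes it below -/
import Mathlib

section
/- Let X be a topological vector space, f, g : X → ℝ ∪ {+∞} proper continuous convex functions, and α ∈ ℝ. Assume f and g have the intersection property on X at level α (i.e. {f < α} ∩ {g < α} = ∅) and that {f ≤ α} ∩ {g ≤ α} ≠ ∅. Then there exist x₁ ∈ dom(f), x₂ ∈ dom(g), and affine continuous functions φ₁ ∈ ∂_{Φ_conv} f(x₁), φ₂ ∈ ∂_{Φ_conv} g(x₂) such that φ₁ and φ₂ have the intersection property on X at level α. -/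
def edom {X : Type*} (f : X → EReal) : Set X := {x | f x ≠ ⊤}

def ERealConvexOn {X : Type*} [AddCommGroup X] [Module ℝ X] (f : X → EReal) : Prop :=
  ∀ x y : X, ∀ t : ℝ, 0 ≤ t → t ≤ 1 →
    f (t • x + (1 - t) • y) ≤ (t : EReal) * f x + ((1 - t : ℝ) : EReal) * f y

/-- The class `Φ_conv` of continuous affine functions. -/
def PhiConvCls (X : Type*) [AddCommGroup X] [Module ℝ X] [TopologicalSpace X] :
    Set (X → ℝ) :=
  {φ | ∃ (ℓ : X →L[ℝ] ℝ) (c : ℝ), ∀ x, φ x = ℓ x + c}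

/-- The `Φ_conv`-subdifferential of `f` at `x₀`. -/
def SubdiffConv {X : Type*} [AddCommGroup X] [Module ℝ X] [TopologicalSpace X]
    (f : X → EReal) (x₀ : X) : Set (X → ℝ) :=
  {φ | φ ∈ PhiConvCls X ∧ ∀ x, ((φ x - φ x₀ : ℝ) : EReal) + f x₀ ≤ f x}

def IntersectionProperty {X : Type*} (φ₁ φ₂ : X → ℝ) (α : ℝ) : Prop :=
  {x | φ₁ x < α} ∩ {x | φ₂ x < α} = ∅

/-!
Pick `x₀` with `f x₀ ≤ α` and `g x₀ ≤ α`. A hyperplane `ℓ = ℓ x₀` separating the open convex sets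
`{f < α}` and `{g < α}` splits `X` into two closed half-spaces on which `x₀` minimizes `f` and `g`
respectively (if one of these sets is empty, use `X` and `{x₀}` instead). When a continuous convex
function is minimized at `x₀` over a convex set `D`, separating its open strict epigraph from
`D × (-∞, f x₀]` yields an affine minorant, exact at `x₀`, which is also minimized over `D` at `x₀`.
Normalized to take the value `α` at `x₀`, the two minorants are `≥ α` on complementary half-spaces.
-/

open Set

namespace ERealConvexOn

variable {X : Type*} [AddCommGroup X] [Module ℝ X] {f : X → EReal}

theorem apply_combo_lt (hbot : ∀ x, f x ≠ ⊥) (hconv : ERealConvexOn f) {x y : X} {a b r s : ℝ}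
    (ha : 0 < a) (hb : 0 ≤ b) (hab : a + b = 1) (hx : f x < r) (hy : f y ≤ s) :
    f (a • x + b • y) < (a * r + b * s : ℝ) := by
  obtain rfl : b = 1 - a := by linarith
  obtain ⟨u, hu⟩ : ∃ u : ℝ, f x = u :=
    ⟨_, (EReal.coe_toReal (ne_top_of_lt hx) (hbot x)).symm⟩
  obtain ⟨v, hv⟩ : ∃ v : ℝ, f y = v :=
    ⟨_, (EReal.coe_toReal (hy.trans_lt (EReal.coe_lt_top s)).ne (hbot y)).symm⟩
  rw [hu, EReal.coe_lt_coe_iff] at hx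
  rw [hv, EReal.coe_le_coe_iff] at hy
  calc f (a • x + (1 - a) • y) ≤ a * f x + ((1 - a : ℝ) : EReal) * f y :=
        hconv x y a ha.le (by linarith)
    _ = ((a * u + (1 - a) * v : ℝ) : EReal) := by rw [hu, hv]; norm_cast
    _ < _ := EReal.coe_lt_coe_iff.2 <| add_lt_add_of_lt_of_le
        (mul_lt_mul_of_pos_left hx ha) (mul_le_mul_of_nonneg_left hy hb)

theorem convex_strictEpigraph (hbot : ∀ x, f x ≠ ⊥) (hconv : ERealConvexOn f) :
    Convex ℝ {p : X × ℝ | f p.1 < p.2} :=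
  convex_iff_forall_pos.2 fun _ hp _ hq _ _ ha hb hab =>
    hconv.apply_combo_lt hbot ha hb.le hab hp hq.le

theorem convex_setOf_lt (hbot : ∀ x, f x ≠ ⊥) (hconv : ERealConvexOn f) (r : ℝ) :
    Convex ℝ {x | f x < r} :=
  convex_iff_forall_pos.2 fun _ hx _ hy a b ha hb hab => by
    simpa [← add_mul, hab] using hconv.apply_combo_lt hbot ha hb.le hab hx hy.le

theorem mem_closure_setOf_lt [TopologicalSpace X] [ContinuousAdd X] [ContinuousSMul ℝ X]
    (hbot : ∀ x, f x ≠ ⊥) (hconv : ERealConvexOn f) {x y : X} {r : ℝ} (hy : f y < r)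
    (hx : f x ≤ r) : x ∈ closure {x | f x < r} := by
  refine closure_mono ?_ (segment_subset_closure_openSegment (right_mem_segment ℝ y x))
  rintro _ ⟨a, b, ha, hb, hab, rfl⟩
  simpa [← add_mul, hab] using hconv.apply_combo_lt hbot ha hb.le hab hy hx

end ERealConvexOn

theorem ContinuousLinearMap.apply_prod_eq {X : Type*} [AddCommGroup X] [Module ℝ X]
    [TopologicalSpace X] (L : X × ℝ →L[ℝ] ℝ) (x : X) (r : ℝ) :
    L (x, r) = L (x, 0) + r * L (0, 1) := by
  have : (x, r) = (x, 0) + r • ((0 : X), (1 : ℝ)) := by simp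
  rw [this, map_add, map_smul, smul_eq_mul]

section Topological

variable {X : Type*} [AddCommGroup X] [Module ℝ X] [TopologicalSpace X] [IsTopologicalAddGroup X]
  [ContinuousSMul ℝ X] {f g : X → EReal}

theorem ERealConvexOn.exists_affine_le_of_isMinOn (hbot : ∀ x, f x ≠ ⊥)
    (hconv : ERealConvexOn f) (hcont : Continuous f) {D : Set X} (hD : Convex ℝ D) {x₀ : X}
    (hx₀ : x₀ ∈ D) (hmin : IsMinOn f D x₀) {a : ℝ} (ha : f x₀ = a) :
    ∃ (ℓ : X →L[ℝ] ℝ) (c : ℝ), (∀ x, ((ℓ x + c : ℝ) : EReal) ≤ f x) ∧ ∀ x ∈ D, a ≤ ℓ x + c := by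
  have hopen : IsOpen {p : X × ℝ | f p.1 < p.2} :=
    isOpen_lt (hcont.comp continuous_fst) (continuous_coe_real_ereal.comp continuous_snd)
  have hdisj : Disjoint {p : X × ℝ | f p.1 < p.2} (D ×ˢ Iic a) := by
    rw [disjoint_left]
    rintro ⟨x, r⟩ hxr ⟨hx, hr⟩
    exact (hmin hx).not_gt (ha ▸ hxr.trans_le (EReal.coe_le_coe_iff.2 hr))
  obtain ⟨L, u, hLepi, hLD⟩ := geometric_hahn_banach_open (hconv.convex_strictEpigraph hbot)
    hopen (hD.prod (convex_Iic a)) hdisj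
  set β := L (0, 1)
  -- `β < 0` makes the hyperplane `L = u` the graph of an affine function of `x`
  have hβ : 0 < -β := by
    have h₁ := hLepi (x₀, a + 1)
      (show f x₀ < ((a + 1 : ℝ) : EReal) from ha ▸ EReal.coe_lt_coe_iff.2 (lt_add_one a))
    have h₂ := hLD (x₀, a) ⟨hx₀, self_mem_Iic⟩
    rw [L.apply_prod_eq] at h₁ h₂
    linarith
  have hq : ∀ x, ((-β)⁻¹ • L.comp (ContinuousLinearMap.inl ℝ X ℝ)) x + -(-β)⁻¹ * u
      = (L (x, 0) - u) / -β := fun x => by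
    simp only [smul_apply, ContinuousLinearMap.comp_apply,
      ContinuousLinearMap.inl_apply, smul_eq_mul]
    ring
  refine ⟨(-β)⁻¹ • L.comp (ContinuousLinearMap.inl ℝ X ℝ), -(-β)⁻¹ * u, fun x => ?_,
    fun x hx => ?_⟩
  · rw [hq]
    by_contra! h
    obtain ⟨r, hxr, hr⟩ := EReal.exists_between_coe_real h
    have := hLepi (x, r) hxr
    rw [L.apply_prod_eq] at this
    rw [EReal.coe_lt_coe_iff, lt_div_iff₀ hβ] at hr
    linarith
  · have := hLD (x, a) ⟨hx, self_mem_Iic⟩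
    rw [L.apply_prod_eq] at this
    rw [hq, le_div_iff₀ hβ]
    linarith

theorem ERealConvexOn.exists_mem_subdiffConv_isMinOn (hbot : ∀ x, f x ≠ ⊥)
    (hconv : ERealConvexOn f) (hcont : Continuous f) {D : Set X} (hD : Convex ℝ D) {x₀ : X}
    (hx₀ : x₀ ∈ D) (hmin : IsMinOn f D x₀) (htop : f x₀ ≠ ⊤) (α : ℝ) :
    ∃ φ ∈ SubdiffConv f x₀, φ x₀ = α ∧ IsMinOn φ D x₀ := by
  obtain ⟨a, ha⟩ : ∃ a : ℝ, f x₀ = a := ⟨_, (EReal.coe_toReal htop (hbot x₀)).symm⟩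
  obtain ⟨ℓ, c, hle, hD⟩ := hconv.exists_affine_le_of_isMinOn hbot hcont hD hx₀ hmin ha
  have hc : ℓ x₀ + c = a :=
    le_antisymm (EReal.coe_le_coe_iff.1 (ha ▸ hle x₀)) (hD x₀ hx₀)
  refine ⟨fun x => ℓ x + (α - ℓ x₀), ⟨⟨ℓ, _, fun _ => rfl⟩, fun x => ?_⟩, by ring,
    fun x hx => ?_⟩
  · rw [ha, ← EReal.coe_add]
    convert hle x using 2
    linarith
  · show ℓ x₀ + _ ≤ ℓ x + _
    linarith [hD x hx]

theorem exists_convex_cover_isMinOn (hfbot : ∀ x, f x ≠ ⊥) (hgbot : ∀ x, g x ≠ ⊥)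
    (hfconv : ERealConvexOn f) (hgconv : ERealConvexOn g) (hfcont : Continuous f)
    (hgcont : Continuous g) {α : ℝ} (hdisj : Disjoint {x | f x < α} {x | g x < α}) {x₀ : X}
    (hfx₀ : f x₀ ≤ α) (hgx₀ : g x₀ ≤ α) :
    ∃ D E : Set X, Convex ℝ D ∧ Convex ℝ E ∧ (∀ x, x ∈ D ∨ x ∈ E) ∧ x₀ ∈ D ∧ x₀ ∈ E ∧
      IsMinOn f D x₀ ∧ IsMinOn g E x₀ := by
  rcases eq_empty_or_nonempty {x | f x < α} with hA | ⟨y, hy⟩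
  · refine ⟨univ, {x₀}, convex_univ, convex_singleton x₀, fun x => .inl trivial, trivial, rfl,
      isMinOn_univ_iff.2 fun x => hfx₀.trans (not_lt.1 (eq_empty_iff_forall_notMem.1 hA x)),
      isMinOn_iff.2 fun _ hx => (congrArg g (eq_of_mem_singleton hx)).ge⟩
  rcases eq_empty_or_nonempty {x | g x < α} with hB | ⟨z, hz⟩
  · refine ⟨{x₀}, univ, convex_singleton x₀, convex_univ, fun x => .inr trivial, rfl, trivial,
      isMinOn_iff.2 fun _ hx => (congrArg f (eq_of_mem_singleton hx)).ge,
      isMinOn_univ_iff.2 fun x => hgx₀.trans (not_lt.1 (eq_empty_iff_forall_notMem.1 hB x))⟩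
  obtain ⟨ℓ, u, hA, hB⟩ := geometric_hahn_banach_open_open (hfconv.convex_setOf_lt hfbot α)
    (isOpen_lt hfcont continuous_const) (hgconv.convex_setOf_lt hgbot α)
    (isOpen_lt hgcont continuous_const) hdisj
  have hle : ℓ x₀ ≤ u :=
    closure_minimal (fun x hx => (hA x hx).le) (isClosed_le ℓ.continuous continuous_const)
      (hfconv.mem_closure_setOf_lt hfbot hy hfx₀)
  have hge : u ≤ ℓ x₀ :=
    closure_minimal (fun x hx => (hB x hx).le) (isClosed_le continuous_const ℓ.continuous)
      (hgconv.mem_closure_setOf_lt hgbot hz hgx₀)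
  refine ⟨{x | u ≤ ℓ x}, {x | ℓ x ≤ u}, convex_halfSpace_ge ℓ.isLinear u,
    convex_halfSpace_le ℓ.isLinear u, fun x => le_total u (ℓ x), hge, hle,
    fun x hx => ?_, fun x hx => ?_⟩
  · exact not_lt.1 fun h => (hA x (h.trans_le hfx₀)).not_ge hx
  · exact not_lt.1 fun h => (hB x (h.trans_le hgx₀)).not_ge hx

end Topological

theorem intersection_property_conv_subgradients_general
    {X : Type*} [AddCommGroup X] [Module ℝ X] [TopologicalSpace X]
    [IsTopologicalAddGroup X] [ContinuousSMul ℝ X]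
    (f g : X → EReal) (hfbot : ∀ x, f x ≠ ⊥) (hgbot : ∀ x, g x ≠ ⊥)
    (hfconv : ERealConvexOn f) (hgconv : ERealConvexOn g)
    (hfcont : Continuous f) (hgcont : Continuous g)
    (α : ℝ)
    (hIP : {x | f x < (α : EReal)} ∩ {x | g x < (α : EReal)} = ∅)
    (hmeet : ({x | f x ≤ (α : EReal)} ∩ {x | g x ≤ (α : EReal)}).Nonempty) :
    ∃ x₁ ∈ edom f, ∃ x₂ ∈ edom g,
      ∃ φ₁ ∈ SubdiffConv f x₁, ∃ φ₂ ∈ SubdiffConv g x₂,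
        IntersectionProperty φ₁ φ₂ α := by
  obtain ⟨x₀, hfx₀, hgx₀⟩ := hmeet
  have hf₀ : f x₀ ≠ ⊤ := (hfx₀.trans_lt (EReal.coe_lt_top α)).ne
  have hg₀ : g x₀ ≠ ⊤ := (hgx₀.trans_lt (EReal.coe_lt_top α)).ne
  obtain ⟨D, E, hD, hE, hcover, hx₀D, hx₀E, hfmin, hgmin⟩ :=
    exists_convex_cover_isMinOn hfbot hgbot hfconv hgconv hfcont hgcont
      (disjoint_iff_inter_eq_empty.2 hIP) hfx₀ hgx₀
  obtain ⟨φ₁, hφ₁, hφ₁x₀, hφ₁D⟩ := hfconv.exists_mem_subdiffConv_isMinOn hfbot hfcont hD hx₀D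
    hfmin hf₀ α
  obtain ⟨φ₂, hφ₂, hφ₂x₀, hφ₂E⟩ := hgconv.exists_mem_subdiffConv_isMinOn hgbot hgcont hE hx₀E
    hgmin hg₀ α
  refine ⟨x₀, hf₀, x₀, hg₀, φ₁, hφ₁, φ₂, hφ₂, eq_empty_of_forall_notMem fun x hx => ?_⟩
  rcases hcover x with hxD | hxE
  · exact (hφ₁D hxD).not_gt (hφ₁x₀ ▸ hx.1 : φ₁ x < φ₁ x₀)
  · exact (hφ₂E hxE).not_gt (hφ₂x₀ ▸ hx.2 : φ₂ x < φ₂ x₀)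

theorem intersection_property_conv_subgradients
    {X : Type*} [AddCommGroup X] [Module ℝ X] [TopologicalSpace X]
    [IsTopologicalAddGroup X] [ContinuousSMul ℝ X] [LocallyConvexSpace ℝ X]
    (f g : X → EReal) (hfbot : ∀ x, f x ≠ ⊥) (hgbot : ∀ x, g x ≠ ⊥)
    (hfproper : (edom f).Nonempty) (hgproper : (edom g).Nonempty)
    (hfconv : ERealConvexOn f) (hgconv : ERealConvexOn g)
    (hfcont : Continuous f) (hgcont : Continuous g)
    (α : ℝ)
    (hIP : {x | f x < (α : EReal)} ∩ {x | g x < (α : EReal)} = ∅)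
    (hmeet : ({x | f x ≤ (α : EReal)} ∩ {x | g x ≤ (α : EReal)}).Nonempty) :
    ∃ x₁ ∈ edom f, ∃ x₂ ∈ edom g,
      ∃ φ₁ ∈ SubdiffConv f x₁, ∃ φ₂ ∈ SubdiffConv g x₂,
        IntersectionProperty φ₁ φ₂ α :=
  intersection_property_conv_subgradients_general f g hfbot hgbot hfconv hgconv hfcont hgcont α hIP
    hmeet
end

section
/- Let X be a Hilbert space, φ₁(x) = −a₁‖x‖² + ⟨ℓ₁, x⟩ + c₁ and φ₂(x) = −a₂‖x‖² + ⟨ℓ₂, x⟩ + c₂ with a₁, a₂ ≥ 0. If φ₁ and φ₂ have the intersection property on X at level α (the strict sublevel sets at α are disjoint) then either one of φ₁, φ₂ is a constant function with value ≥ α, or both are affine (a₁ = a₂ = 0). -/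
private lemma aux_large_norm {X : Type*} [NormedAddCommGroup X] [InnerProductSpace ℝ X]
    (a : ℝ) (ha : 0 < a) (ℓ : X →L[ℝ] ℝ) (c α : ℝ) :
    ∃ R : ℝ, 0 ≤ R ∧ ∀ x : X, R ≤ ‖x‖ → -a * ‖x‖ ^ 2 + ℓ x + c < α := by
  refine ⟨max ((‖ℓ‖ + 1) / a) (max (c - α + 1) 0),
    le_max_of_le_right (le_max_right _ _), ?_⟩
  intro x hx
  have h1 : (‖ℓ‖ + 1) / a ≤ ‖x‖ := le_trans (le_max_left _ _) hx
  have h2 : c - α + 1 ≤ ‖x‖ := le_trans (le_trans (le_max_left _ _) (le_max_right _ _)) hx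
  have hℓx : ℓ x ≤ ‖ℓ‖ * ‖x‖ := le_trans (le_abs_self _) (ℓ.le_opNorm x)
  have h3 : ‖ℓ‖ + 1 ≤ a * ‖x‖ := by
    rw [div_le_iff₀ ha] at h1; linarith
  nlinarith [norm_nonneg x, sq_nonneg ‖x‖]

private lemma aux_key {X : Type*} [NormedAddCommGroup X] [InnerProductSpace ℝ X]
    [Nontrivial X]
    (a₁ a₂ : ℝ) (ha₁ : 0 < a₁) (ha₂ : 0 ≤ a₂)
    (ℓ₁ ℓ₂ : X →L[ℝ] ℝ) (c₁ c₂ : ℝ) (α : ℝ)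
    (h : ∀ x : X, ¬(-a₁ * ‖x‖ ^ 2 + ℓ₁ x + c₁ < α ∧ -a₂ * ‖x‖ ^ 2 + ℓ₂ x + c₂ < α)) :
    α ≤ c₂ ∧ ∀ x : X, -a₂ * ‖x‖ ^ 2 + ℓ₂ x + c₂ = c₂ := by
  obtain ⟨R₁, hR₁0, hR₁⟩ := aux_large_norm a₁ ha₁ ℓ₁ c₁ α
  -- a₂ = 0
  have ha₂0 : a₂ = 0 := by
    by_contra h0
    have ha₂' : 0 < a₂ := lt_of_le_of_ne ha₂ (Ne.symm h0)
    obtain ⟨R₂, hR₂0, hR₂⟩ := aux_large_norm a₂ ha₂' ℓ₂ c₂ α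
    obtain ⟨x, hx⟩ := exists_norm_eq X (le_max_of_le_left hR₁0 : (0:ℝ) ≤ max R₁ R₂)
    exact h x ⟨hR₁ x (hx ▸ le_max_left _ _), hR₂ x (hx ▸ le_max_right _ _)⟩
  subst ha₂0
  -- ℓ₂ = 0
  have hℓ₂ : ℓ₂ = 0 := by
    by_contra hne
    obtain ⟨y₀, hy₀⟩ := DFunLike.ne_iff.1 hne
    simp only [ContinuousLinearMap.zero_apply] at hy₀
    obtain ⟨y, hy⟩ : ∃ y : X, ℓ₂ y < 0 := by
      rcases lt_or_gt_of_ne hy₀ with hlt | hgt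
      · exact ⟨y₀, hlt⟩
      · exact ⟨-y₀, by simpa using neg_neg_iff_pos.2 hgt⟩
    have hy0 : y ≠ 0 := by intro hy0; rw [hy0] at hy; simp at hy
    have hyn : 0 < ‖y‖ := norm_pos_iff.2 hy0
    set t : ℝ := max (R₁ / ‖y‖) ((c₂ - α + 1) / (-ℓ₂ y)) with ht
    have ht0 : 0 ≤ t := le_trans (div_nonneg hR₁0 hyn.le) (le_max_left _ _)
    set x : X := t • y with hxdef
    have hxn : ‖x‖ = t * ‖y‖ := by
      rw [hxdef, norm_smul, Real.norm_eq_abs, abs_of_nonneg ht0]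
    have h1 : R₁ ≤ ‖x‖ := by
      rw [hxn]
      calc R₁ = (R₁ / ‖y‖) * ‖y‖ := by field_simp
        _ ≤ t * ‖y‖ := by
          apply mul_le_mul_of_nonneg_right (le_max_left _ _) hyn.le
    have h2 : -(0:ℝ) * ‖x‖ ^ 2 + ℓ₂ x + c₂ < α := by
      have hℓ₂x : ℓ₂ x = t * ℓ₂ y := by rw [hxdef, map_smul, smul_eq_mul]
      have hneg : 0 < -ℓ₂ y := neg_pos.2 hy
      have := (div_le_iff₀ hneg).1 (le_max_right (R₁ / ‖y‖) ((c₂ - α + 1) / (-ℓ₂ y)))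
      rw [hℓ₂x]
      nlinarith
    exact h x ⟨hR₁ x h1, h2⟩
  -- α ≤ c₂
  obtain ⟨x, hx⟩ := exists_norm_eq X hR₁0
  have h2 := h x
  rw [hℓ₂] at h2 ⊢
  constructor
  · by_contra hc
    push_neg at hc
    exact h2 ⟨hR₁ x hx.ge, by simpa using hc⟩
  · intro z; simp

theorem intersection_property_phiLsc_dichotomy
    {X : Type*} [NormedAddCommGroup X] [InnerProductSpace ℝ X] [CompleteSpace X]
    (a₁ a₂ : ℝ) (ha₁ : 0 ≤ a₁) (ha₂ : 0 ≤ a₂)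
    (ℓ₁ ℓ₂ : X →L[ℝ] ℝ) (c₁ c₂ : ℝ) (α : ℝ)
    (hIP : IntersectionProperty (fun x => -a₁ * ‖x‖ ^ 2 + ℓ₁ x + c₁)
      (fun x => -a₂ * ‖x‖ ^ 2 + ℓ₂ x + c₂) α) :
    ((∃ r : ℝ, α ≤ r ∧ ∀ x : X, -a₁ * ‖x‖ ^ 2 + ℓ₁ x + c₁ = r) ∨
     (∃ r : ℝ, α ≤ r ∧ ∀ x : X, -a₂ * ‖x‖ ^ 2 + ℓ₂ x + c₂ = r)) ∨
    (a₁ = 0 ∧ a₂ = 0) := by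
  have h : ∀ x : X, ¬(-a₁ * ‖x‖ ^ 2 + ℓ₁ x + c₁ < α ∧ -a₂ * ‖x‖ ^ 2 + ℓ₂ x + c₂ < α) := by
    intro x hx
    have := Set.eq_empty_iff_forall_notMem.1 hIP x
    exact this ⟨hx.1, hx.2⟩
  rcases subsingleton_or_nontrivial X with hX | hX
  · -- trivial space: both functions constant
    have hz : ∀ x : X, x = 0 := fun x => Subsingleton.elim x 0
    have h0 := h 0
    simp only [norm_zero, map_zero] at h0
    push_neg at h0
    by_cases hc₁ : -a₁ * ‖(0:X)‖ ^ 2 + ℓ₁ 0 + c₁ < α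
    · have hc₂ : α ≤ c₂ := by simp only [norm_zero, map_zero] at hc₁ ⊢; nlinarith [h0 (by nlinarith [hc₁])]
      left; right
      exact ⟨c₂, hc₂, fun x => by rw [hz x]; simp⟩
    · left; left
      refine ⟨c₁, ?_, fun x => by rw [hz x]; simp⟩
      simp only [norm_zero, map_zero] at hc₁
      push_neg at hc₁
      simpa using hc₁
  · rcases eq_or_lt_of_le ha₁ with h1 | h1
    · rcases eq_or_lt_of_le ha₂ with h2 | h2
      · exact Or.inr ⟨h1.symm, h2.symm⟩
      · -- a₂ > 0: φ₁ constant ≥ α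
        have := aux_key a₂ a₁ h2 ha₁ ℓ₂ ℓ₁ c₂ c₁ α (fun x hx => h x ⟨hx.2, hx.1⟩)
        exact Or.inl (Or.inl ⟨c₁, this.1, this.2⟩)
    · have := aux_key a₁ a₂ h1 ha₂ ℓ₁ ℓ₂ c₁ c₂ α h
      exact Or.inl (Or.inr ⟨c₂, this.1, this.2⟩)
end
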